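/- arXiv:1505.07189 — 3 statements merged into one kernel-verified Lean document; each statement's English description precedes it below -/
import Mathlib

section
/- The matrices U = (1/Δ₊)[[e^{-i(u₁-u)/2}, (i/2)pλ],[(i/2)pλ, e^{i(u₁-u)/2}]] and V = (1/Δ₋)[[1, -(i/2)q e^{i(u₂+u)/2}λ^{-1}],[-(i/2)q e^{-i(u₂+u)/2}λ^{-1}, 1]], with Δ₊ = √(1+(p/2)²λ²) and Δ₋ = √(1+(q/2)²λ^{-2}), satisfy the discrete zero-curvature condition V·U₂ = U·V₁ for all λ ≠ 0 if and only if the real function u satisfies the discrete sine-Gordon (Hirota) equation sin((u₁₂ - u₁ - u₂ + u)/4) = (pq/4)·sin((u₁₂ + u₁ + u₂ + u)/4). -/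
open Matrix Complex

noncomputable section

/-- The matrix `U` of the discrete extended frame. -/
def dU (p u u₁ lam : ℝ) : Matrix (Fin 2) (Fin 2) ℂ :=
  ((Real.sqrt (1 + (p/2)^2 * lam^2) : ℂ))⁻¹ •
    !![Complex.exp (-Complex.I * ((u₁ - u)/2)), (Complex.I/2) * p * lam;
       (Complex.I/2) * p * lam, Complex.exp (Complex.I * ((u₁ - u)/2))]

/-- The matrix `V` of the discrete extended frame. -/
def dV (q u u₂ lam : ℝ) : Matrix (Fin 2) (Fin 2) ℂ :=
  ((Real.sqrt (1 + (q/2)^2 * (lam⁻¹)^2) : ℂ))⁻¹ •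
    !![1, -(Complex.I/2) * q * Complex.exp (Complex.I * ((u₂ + u)/2)) * (lam : ℂ)⁻¹;
       -(Complex.I/2) * q * Complex.exp (-Complex.I * ((u₂ + u)/2)) * (lam : ℂ)⁻¹, 1]

/-- `exp (I x)` for real `x` in terms of real cosine and sine. -/
lemma exp_I_real (x : ℝ) :
    Complex.exp (Complex.I * x) = (Real.cos x : ℂ) + (Real.sin x : ℂ) * Complex.I := by
  rw [mul_comm, Complex.exp_mul_I, Complex.ofReal_cos, Complex.ofReal_sin]

/-- `exp (-I x)` for real `x` in terms of real cosine and sine. -/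
lemma exp_neg_I_real (x : ℝ) :
    Complex.exp (-(Complex.I * x)) = (Real.cos x : ℂ) - (Real.sin x : ℂ) * Complex.I := by
  rw [show -(Complex.I * (x:ℂ)) = Complex.I * ((-x : ℝ) : ℂ) by push_cast; ring, exp_I_real]
  rw [Real.cos_neg, Real.sin_neg]
  push_cast
  ring

/-- The quarter-angle exponential equation is equivalent to a sine equation. -/
lemma exp_eq_iff_sin_eq (s t k : ℝ) :
    Complex.exp (-(Complex.I * s)) + (k:ℂ) * Complex.exp (Complex.I * t)
      = Complex.exp (Complex.I * s) + (k:ℂ) * Complex.exp (-(Complex.I * t))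
    ↔ Real.sin s = k * Real.sin t := by
  rw [exp_neg_I_real s, exp_I_real t, exp_I_real s, exp_neg_I_real t]
  constructor
  · intro h
    have him := congrArg Complex.im h
    simp only [Complex.add_im, Complex.sub_im, Complex.mul_im, Complex.ofReal_re,
      Complex.ofReal_im, Complex.I_re, Complex.I_im, Complex.neg_im] at him
    linarith
  · intro h
    apply Complex.ext <;>
      simp only [Complex.add_im, Complex.add_re, Complex.sub_im, Complex.sub_re, Complex.mul_im,
        Complex.mul_re, Complex.ofReal_re, Complex.ofReal_im, Complex.I_re, Complex.I_im] <;>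
      nlinarith [h]

/-- Discrete zero curvature `V · U₂ = U · V₁` for all `λ ≠ 0` iff the discrete
sine-Gordon (Hirota) equation holds. -/
theorem discrete_zero_curvature_iff_Hirota (p q u u₁ u₂ u₁₂ : ℝ)
    (hp : p ≠ 0) (hq : q ≠ 0) :
    (∀ lam : ℝ, lam ≠ 0 →
      dV q u u₂ lam * dU p u₂ u₁₂ lam = dU p u u₁ lam * dV q u₁ u₁₂ lam) ↔
    Real.sin ((u₁₂ - u₁ - u₂ + u)/4) = (p*q/4) * Real.sin ((u₁₂ + u₁ + u₂ + u)/4) := by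
  have hI : (Complex.I)^2 = -1 := Complex.I_sq
  have hk : ((p*q/4 : ℝ) : ℂ) = (p:ℂ)*(q:ℂ)/4 := by push_cast; ring
  -- the phase
  set Φ : ℂ := Complex.I * (((u₁₂:ℂ) + u₁ - u₂ - u)/4) with hΦ
  -- shorthand for the quarter-angle exponentials appearing in `exp_eq_iff_sin_eq`
  constructor
  · -- forward direction: evaluate at `lam = 1`, look at the (0,0) entry
    intro h
    have h00 := congrFun (congrFun (h 1 one_ne_zero) 0) 0
    simp [dU, dV, Matrix.mul_apply, Fin.sum_univ_two] at h00
    have hA : ((Real.sqrt (1 + (q/2)^2) : ℝ) : ℂ) ≠ 0 := by norm_cast; positivity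
    have hB : ((Real.sqrt (1 + (p/2)^2) : ℝ) : ℂ) ≠ 0 := by norm_cast; positivity
    have hAinv : ((Real.sqrt (1 + (q/2)^2) : ℝ) : ℂ) * ((Real.sqrt (1 + (q/2)^2) : ℝ) : ℂ)⁻¹ = 1 :=
      mul_inv_cancel₀ hA
    have hBinv : ((Real.sqrt (1 + (p/2)^2) : ℝ) : ℂ) * ((Real.sqrt (1 + (p/2)^2) : ℝ) : ℂ)⁻¹ = 1 :=
      mul_inv_cancel₀ hB
    -- the half-angle exponential equation
    have E : Complex.exp (-(Complex.I*(((u₁₂:ℂ) - u₂)/2))) + (p:ℂ)*q/4 * Complex.exp (Complex.I*(((u₂:ℂ) + u)/2))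
        = Complex.exp (-(Complex.I*(((u₁:ℂ) - u)/2))) + (p:ℂ)*q/4 * Complex.exp (-(Complex.I*(((u₁₂:ℂ) + u₁)/2))) := by
      set A : ℂ := ((Real.sqrt (1 + (q/2)^2) : ℝ) : ℂ) with hAd
      set B : ℂ := ((Real.sqrt (1 + (p/2)^2) : ℝ) : ℂ) with hBd
      set X₂ : ℂ := Complex.exp (-(Complex.I*(((u₁₂:ℂ) - u₂)/2))) with hX2
      set X : ℂ := Complex.exp (-(Complex.I*(((u₁:ℂ) - u)/2))) with hX
      set Y : ℂ := Complex.exp (Complex.I*(((u₂:ℂ) + u)/2)) with hY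
      set Z : ℂ := Complex.exp (-(Complex.I*(((u₁₂:ℂ) + u₁)/2))) with hZ
      linear_combination (A*B)*h00
        - ((X₂-X) + (p:ℂ)*q/4*(Y-Z))*(B*B⁻¹)*hAinv
        - ((X₂-X) + (p:ℂ)*q/4*(Y-Z))*hBinv
        + (p:ℂ)*q/4*(Y-Z)*(A*A⁻¹*B*B⁻¹)*hI
    rw [← exp_eq_iff_sin_eq ((u₁₂ - u₁ - u₂ + u)/4) ((u₁₂ + u₁ + u₂ + u)/4) (p*q/4)]
    have e1 : Complex.exp (-(Complex.I * (((u₁₂ - u₁ - u₂ + u)/4 : ℝ) : ℂ)))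
        = Complex.exp Φ * Complex.exp (-(Complex.I*(((u₁₂:ℂ) - u₂)/2))) := by
      rw [← Complex.exp_add]; congr 1; push_cast; ring
    have e2 : Complex.exp (Complex.I * (((u₁₂ + u₁ + u₂ + u)/4 : ℝ) : ℂ))
        = Complex.exp Φ * Complex.exp (Complex.I*(((u₂:ℂ) + u)/2)) := by
      rw [← Complex.exp_add]; congr 1; push_cast; ring
    have e3 : Complex.exp (Complex.I * (((u₁₂ - u₁ - u₂ + u)/4 : ℝ) : ℂ))
        = Complex.exp Φ * Complex.exp (-(Complex.I*(((u₁:ℂ) - u)/2))) := by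
      rw [← Complex.exp_add]; congr 1; push_cast; ring
    have e4 : Complex.exp (-(Complex.I * (((u₁₂ + u₁ + u₂ + u)/4 : ℝ) : ℂ)))
        = Complex.exp Φ * Complex.exp (-(Complex.I*(((u₁₂:ℂ) + u₁)/2))) := by
      rw [← Complex.exp_add]; congr 1; push_cast; ring
    rw [e1, e2, e3, e4]
    linear_combination Complex.exp Φ * E
      + Complex.exp Φ * (Complex.exp (Complex.I*(((u₂:ℂ) + u)/2))
          - Complex.exp (-(Complex.I*(((u₁₂:ℂ) + u₁)/2)))) * hk
  · -- backward direction
    intro hsin lam hlam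
    have E0 := (exp_eq_iff_sin_eq ((u₁₂ - u₁ - u₂ + u)/4) ((u₁₂ + u₁ + u₂ + u)/4) (p*q/4)).mpr hsin
    -- half-angle equation E
    have E : Complex.exp (-(Complex.I*(((u₁₂:ℂ) - u₂)/2))) + (p:ℂ)*q/4 * Complex.exp (Complex.I*(((u₂:ℂ) + u)/2))
        = Complex.exp (-(Complex.I*(((u₁:ℂ) - u)/2))) + (p:ℂ)*q/4 * Complex.exp (-(Complex.I*(((u₁₂:ℂ) + u₁)/2))) := by
      have f1 : Complex.exp (-(Complex.I*(((u₁₂:ℂ) - u₂)/2)))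
          = Complex.exp (-Φ) * Complex.exp (-(Complex.I * (((u₁₂ - u₁ - u₂ + u)/4 : ℝ) : ℂ))) := by
        rw [← Complex.exp_add]; congr 1; push_cast; ring
      have f2 : Complex.exp (Complex.I*(((u₂:ℂ) + u)/2))
          = Complex.exp (-Φ) * Complex.exp (Complex.I * (((u₁₂ + u₁ + u₂ + u)/4 : ℝ) : ℂ)) := by
        rw [← Complex.exp_add]; congr 1; push_cast; ring
      have f3 : Complex.exp (-(Complex.I*(((u₁:ℂ) - u)/2)))
          = Complex.exp (-Φ) * Complex.exp (Complex.I * (((u₁₂ - u₁ - u₂ + u)/4 : ℝ) : ℂ)) := by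
        rw [← Complex.exp_add]; congr 1; push_cast; ring
      have f4 : Complex.exp (-(Complex.I*(((u₁₂:ℂ) + u₁)/2)))
          = Complex.exp (-Φ) * Complex.exp (-(Complex.I * (((u₁₂ + u₁ + u₂ + u)/4 : ℝ) : ℂ))) := by
        rw [← Complex.exp_add]; congr 1; push_cast; ring
      rw [f1, f2, f3, f4]
      linear_combination Complex.exp (-Φ) * E0
        - Complex.exp (-Φ) * (Complex.exp (Complex.I * (((u₁₂ + u₁ + u₂ + u)/4 : ℝ) : ℂ))
            - Complex.exp (-(Complex.I * (((u₁₂ + u₁ + u₂ + u)/4 : ℝ) : ℂ)))) * hk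
    -- conjugate half-angle equation
    have Ebar : Complex.exp (Complex.I*(((u₁₂:ℂ) - u₂)/2)) + (p:ℂ)*q/4 * Complex.exp (-(Complex.I*(((u₂:ℂ) + u)/2)))
        = Complex.exp (Complex.I*(((u₁:ℂ) - u)/2)) + (p:ℂ)*q/4 * Complex.exp (Complex.I*(((u₁₂:ℂ) + u₁)/2)) := by
      have g1 : Complex.exp (Complex.I*(((u₁₂:ℂ) - u₂)/2))
          = Complex.exp Φ * Complex.exp (Complex.I * (((u₁₂ - u₁ - u₂ + u)/4 : ℝ) : ℂ)) := by
        rw [← Complex.exp_add]; congr 1; push_cast; ring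
      have g2 : Complex.exp (-(Complex.I*(((u₂:ℂ) + u)/2)))
          = Complex.exp Φ * Complex.exp (-(Complex.I * (((u₁₂ + u₁ + u₂ + u)/4 : ℝ) : ℂ))) := by
        rw [← Complex.exp_add]; congr 1; push_cast; ring
      have g3 : Complex.exp (Complex.I*(((u₁:ℂ) - u)/2))
          = Complex.exp Φ * Complex.exp (-(Complex.I * (((u₁₂ - u₁ - u₂ + u)/4 : ℝ) : ℂ))) := by
        rw [← Complex.exp_add]; congr 1; push_cast; ring
      have g4 : Complex.exp (Complex.I*(((u₁₂:ℂ) + u₁)/2))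
          = Complex.exp Φ * Complex.exp (Complex.I * (((u₁₂ + u₁ + u₂ + u)/4 : ℝ) : ℂ)) := by
        rw [← Complex.exp_add]; congr 1; push_cast; ring
      rw [g1, g2, g3, g4]
      linear_combination (-(Complex.exp Φ)) * E0
        - Complex.exp Φ * (Complex.exp (-(Complex.I * (((u₁₂ + u₁ + u₂ + u)/4 : ℝ) : ℂ)))
            - Complex.exp (Complex.I * (((u₁₂ + u₁ + u₂ + u)/4 : ℝ) : ℂ))) * hk
    -- now prove the matrix identity entrywise
    have hl : (lam:ℂ) ≠ 0 := by exact_mod_cast hlam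
    have hinv : (lam:ℂ) * (lam:ℂ)⁻¹ = 1 := mul_inv_cancel₀ hl
    have h01 : Complex.exp (Complex.I * ((u₂ + u : ℂ)/2)) * Complex.exp (Complex.I * ((u₁₂ - u₂ : ℂ)/2))
        = Complex.exp (-(Complex.I * ((u₁ - u : ℂ)/2))) * Complex.exp (Complex.I * ((u₁₂ + u₁ : ℂ)/2)) := by
      rw [← Complex.exp_add, ← Complex.exp_add]; congr 1; ring
    have h10 : Complex.exp (-(Complex.I * ((u₂ + u : ℂ)/2))) * Complex.exp (-(Complex.I * ((u₁₂ - u₂ : ℂ)/2)))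
        = Complex.exp (Complex.I * ((u₁ - u : ℂ)/2)) * Complex.exp (-(Complex.I * ((u₁₂ + u₁ : ℂ)/2))) := by
      rw [← Complex.exp_add, ← Complex.exp_add]; congr 1; ring
    set A : ℂ := (↑(Real.sqrt (1 + (q / 2) ^ 2 * (lam ^ 2)⁻¹)) : ℂ)⁻¹ with hAdef
    set B : ℂ := (↑(Real.sqrt (1 + (p / 2) ^ 2 * lam ^ 2)) : ℂ)⁻¹ with hBdef
    ext i j
    fin_cases i <;> fin_cases j <;>
      simp [dU, dV, Matrix.mul_apply, Fin.sum_univ_two]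
    · linear_combination (A * B) * E
        - (A*B)*((p:ℂ)*q/4)*(Complex.exp (Complex.I*((u₂ + u : ℂ)/2)) - Complex.exp (-(Complex.I*((u₁₂ + u₁ : ℂ)/2))))*((lam:ℂ)*(lam:ℂ)⁻¹) * hI
        + (A*B)*((p:ℂ)*q/4)*(Complex.exp (Complex.I*((u₂ + u : ℂ)/2)) - Complex.exp (-(Complex.I*((u₁₂ + u₁ : ℂ)/2)))) * hinv
    · linear_combination (-(A*B*(Complex.I/2*(q:ℂ))*(lam:ℂ)⁻¹)) * h01
    · linear_combination (-(A*B*(Complex.I/2*(q:ℂ))*(lam:ℂ)⁻¹)) * h10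
    · linear_combination (A * B) * Ebar
        - (A*B)*((p:ℂ)*q/4)*(Complex.exp (-(Complex.I*((u₂ + u : ℂ)/2))) - Complex.exp (Complex.I*((u₁₂ + u₁ : ℂ)/2)))*((lam:ℂ)*(lam:ℂ)⁻¹) * hI
        + (A*B)*((p:ℂ)*q/4)*(Complex.exp (-(Complex.I*((u₂ + u : ℂ)/2))) - Complex.exp (Complex.I*((u₁₂ + u₁ : ℂ)/2))) * hinv
end
end

section
/- Suppose real numbers X, X₂, Y, Y₁ and real constants p, q satisfy -X₂ + Y = X + Y₁ and e^{iX₂/2} + (pq/4)e^{iY/2} = e^{iX/2} + (pq/4)e^{-iY₁/2}, where X = h₁ - h, X₂ = h₁₂ - h₂, Y = 2β - (h₂ + h), Y₁ = 2β - (h₁₂ + h₁) for real numbers h, h₁, h₂, h₁₂, β. If u, u₁, u₂, u₁₂ are real numbers with h₁ - h = -u₁ + u, h₁₂ - h₂ = -u₁₂ + u₂, 2β - (h₂ + h) = u₂ + u, and 2β - (h₁₂ + h₁) = u₁₂ + u₁, then u satisfies sin((u₁₂ - u₁ - u₂ + u)/4) = (pq/4)sin((u₁₂ + u₁ + u₂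 + u)/4). -/
open Complex

noncomputable section

lemma rot_key (k g G m : ℝ)
    (he : Complex.exp ((↑(m - g) : ℂ) * Complex.I) +
        (k : ℂ) * Complex.exp ((↑(m + G) : ℂ) * Complex.I) =
      Complex.exp ((↑(m + g) : ℂ) * Complex.I) +
        (k : ℂ) * Complex.exp ((↑(m - G) : ℂ) * Complex.I)) :
    Real.sin g = k * Real.sin G := by
  have hre := congrArg Complex.re he
  have him := congrArg Complex.im he
  simp only [Complex.add_re, Complex.add_im, Complex.re_ofReal_mul, Complex.im_ofReal_mul,
    Complex.exp_ofReal_mul_I_re, Complex.exp_ofReal_mul_I_im] at hre him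
  simp only [Real.sin_add, Real.cos_add, Real.sin_sub, Real.cos_sub] at hre him
  linear_combination (-(Real.cos m)/2) * him + (Real.sin m/2) * hre +
    (k * Real.sin G - Real.sin g) * (Real.sin_sq_add_cos_sq m)

/-- One lattice cell of the converse construction: the compatibility equations for the
frame, rewritten via `u`, give the discrete sine-Gordon equation. -/
theorem compatibility_gives_sineGordon
    (p q h h₁ h₂ h₁₂ β u u₁ u₂ u₁₂ : ℝ)
    (heq1 : -(h₁₂ - h₂) + (2*β - (h₂ + h)) = (h₁ - h) + (2*β - (h₁₂ + h₁)))
    (heq2 : Complex.exp (Complex.I * ((h₁₂ - h₂)/2)) +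
        (p*q/4 : ℝ) * Complex.exp (Complex.I * ((2*β - (h₂ + h))/2)) =
      Complex.exp (Complex.I * ((h₁ - h)/2)) +
        (p*q/4 : ℝ) * Complex.exp (-Complex.I * ((2*β - (h₁₂ + h₁))/2)))
    (hu1 : h₁ - h = -u₁ + u) (hu2 : h₁₂ - h₂ = -u₁₂ + u₂)
    (hu3 : 2*β - (h₂ + h) = u₂ + u) (hu4 : 2*β - (h₁₂ + h₁) = u₁₂ + u₁) :
    Real.sin ((u₁₂ - u₁ - u₂ + u)/4) = (p*q/4) * Real.sin ((u₁₂ + u₁ + u₂ + u)/4) := by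
  set g : ℝ := (u₁₂ - u₁ - u₂ + u)/4 with hg
  set G : ℝ := (u₁₂ + u₁ + u₂ + u)/4 with hG
  set m : ℝ := (-u₁₂ + u₂ - u₁ + u)/4 with hm
  have hc1 : (h₁ : ℂ) - h = ((-u₁ + u : ℝ) : ℂ) := by exact_mod_cast hu1
  have hc2 : (h₁₂ : ℂ) - h₂ = ((-u₁₂ + u₂ : ℝ) : ℂ) := by exact_mod_cast hu2
  have hc3 : 2*(β : ℂ) - ((h₂ : ℂ) + h) = ((u₂ + u : ℝ) : ℂ) := by exact_mod_cast hu3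
  have hc4 : 2*(β : ℂ) - ((h₁₂ : ℂ) + h₁) = ((u₁₂ + u₁ : ℝ) : ℂ) := by exact_mod_cast hu4
  apply rot_key (p*q/4) g G m
  rw [show ((↑(m - g) : ℂ) * Complex.I) = Complex.I * (((h₁₂:ℂ) - h₂)/2) by
      rw [hc2]; push_cast; unfold m g; push_cast; ring,
    show ((↑(m + G) : ℂ) * Complex.I) = Complex.I * ((2*(β:ℂ) - ((h₂:ℂ) + h))/2) by
      rw [hc3]; push_cast; unfold m G; push_cast; ring,
    show ((↑(m + g) : ℂ) * Complex.I) = Complex.I * (((h₁:ℂ) - h)/2) by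
      rw [hc1]; push_cast; unfold m g; push_cast; ring,
    show ((↑(m - G) : ℂ) * Complex.I) = -Complex.I * ((2*(β:ℂ) - ((h₁₂:ℂ) + h₁))/2) by
      rw [hc4]; push_cast; unfold m G; push_cast; ring]
  exact heq2
end
end

section
/- Under the substitution Q₂̄ obtained from the constraint (m-n)(Q - Q₁̄₂̄) = (n+m)((k - Q₁̄)/(1 - kQ₁̄) - (k - Q₂̄)/(1 - kQ₂̄)), the (backward-shifted) discrete sine-Gordon relation Q·Q₁̄₂̄ = ((Q₁̄ - k)/(1 - kQ₁̄))·((Q₂̄ - k)/(1 - kQ₂̄)) implies (m+n)·Q·Q₁̄₂̄ + (m-n)(Q₁̄₂̄ - Q)·((Q₁̄ - k)/(1 - kQ₁̄)) = (m+n)·((Q₁̄ - k)/(1 - kQ₁̄))², provided all denominators are nonzero. -/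
open Complex

noncomputable section

/-- Algebraic elimination of `Q₂̄` from the discrete Amsler constraint and the
(backward-shifted) discrete sine-Gordon relation. -/
theorem amsler_elimination (n m : ℤ) (k : ℝ) (hk : k ≠ 0)
    (Q Q₁ Q₂ Q₁₂ : ℂ) (hQ : Q ≠ 0) (hQ₁ : Q₁ ≠ 0) (hQ₂ : Q₂ ≠ 0) (hQ₁₂ : Q₁₂ ≠ 0)
    (hd₁ : 1 - (k : ℂ) * Q₁ ≠ 0) (hd₂ : 1 - (k : ℂ) * Q₂ ≠ 0)
    (hconstraint : ((m : ℂ) - n) * (Q - Q₁₂) =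
      ((n : ℂ) + m) * (((k : ℂ) - Q₁) / (1 - (k : ℂ) * Q₁) -
        ((k : ℂ) - Q₂) / (1 - (k : ℂ) * Q₂)))
    (hsg : Q * Q₁₂ =
      ((Q₁ - (k : ℂ)) / (1 - (k : ℂ) * Q₁)) * ((Q₂ - (k : ℂ)) / (1 - (k : ℂ) * Q₂))) :
    ((m : ℂ) + n) * Q * Q₁₂ +
        ((m : ℂ) - n) * (Q₁₂ - Q) * ((Q₁ - (k : ℂ)) / (1 - (k : ℂ) * Q₁)) =
      ((m : ℂ) + n) * ((Q₁ - (k : ℂ)) / (1 - (k : ℂ) * Q₁))^2 := by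
  linear_combination ((m : ℂ) + n) * hsg -
    ((Q₁ - (k : ℂ)) / (1 - (k : ℂ) * Q₁)) * hconstraint
end
end
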